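/- Let $A$ and $B$ be integral domains such that the unit group of $A \times B$ has more than one element. Then the factroids of the ring $A \times B$ are exactly the sets $F \times G$, where $F$ is a factroid of $A$ and $G$ is a factroid of $B$. -/

import Mathlib

/-! A factroid `H` of `A × B` is stable under multiplication by units. If `(v, 1)` is a unit
with `v ≠ 1`, then for `(a, b) ∈ H` the difference `(a, b) - (v, 1) * (a, b)` lies in `H` and
equals `(1 - v, 1) * (a, 0)`, where `(1 - v, 1)` is a nonzerodivisor as `A` is a domain; hence
`(a, 0) ∈ H` and then `(0, b) ∈ H`. A unit of `A × B` other than `1` provides such a `(v, 1)` or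
its mirror image `(1, w)`, so `H` is the product of its two coordinate slices, which are
factroids. Conversely a product of factroids is a factroid, since the nonzerodivisors of
`A × B` are the pairs of nonzerodivisors. -/

/-- A factroid of a commutative ring `R`: an additive subgroup `F` such that
`b * a ∈ F` with `b` a nonzerodivisor implies `a ∈ F`. -/
def IsFactroid {R : Type*} [CommRing R] (F : Set R) : Prop :=
  (0 : R) ∈ F ∧ (∀ x ∈ F, ∀ y ∈ F, x + y ∈ F) ∧ (∀ x ∈ F, -x ∈ F) ∧
    ∀ b ∈ nonZeroDivisors R, ∀ a : R, b * a ∈ F → a ∈ F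

open scoped nonZeroDivisors

section

variable {R S : Type*} [CommRing R] [CommRing S]

theorem Prod.mem_nonZeroDivisors_iff {x : R × S} : x ∈ (R × S)⁰ ↔ x.1 ∈ R⁰ ∧ x.2 ∈ S⁰ := by
  simp only [← isRegular_iff_mem_nonZeroDivisors, ← Prod.isRegular_mk]

namespace IsFactroid

section Basic

variable {H : Set R} (hH : IsFactroid H)
include hH

theorem zero_mem : (0 : R) ∈ H := hH.1

theorem add_mem {x y : R} (hx : x ∈ H) (hy : y ∈ H) : x + y ∈ H := hH.2.1 x hx y hy

theorem neg_mem {x : R} (hx : x ∈ H) : -x ∈ H := hH.2.2.1 x hx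

theorem sub_mem {x y : R} (hx : x ∈ H) (hy : y ∈ H) : x - y ∈ H := by
  simpa only [sub_eq_add_neg] using hH.add_mem hx (hH.neg_mem hy)

theorem mem_of_mul_mem {b a : R} (hb : b ∈ R⁰) (h : b * a ∈ H) : a ∈ H := hH.2.2.2 b hb a h

theorem mul_mem_of_isUnit {u x : R} (hu : IsUnit u) (hx : x ∈ H) : u * x ∈ H := by
  obtain ⟨u, rfl⟩ := hu
  exact hH.mem_of_mul_mem u⁻¹.isUnit.mem_nonZeroDivisors (by simpa using hx)

theorem mem_of_sub_mul_eq_mul {u w x y : R} (hu : IsUnit u) (hw : w ∈ R⁰) (hx : x ∈ H)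
    (h : x - u * x = w * y) : y ∈ H :=
  hH.mem_of_mul_mem hw (h ▸ hH.sub_mem hx (hH.mul_mem_of_isUnit hu hx))

end Basic

theorem preimage {R' : Type*} [CommRing R'] {H : Set R'} (hH : IsFactroid H) (f : R →+ R')
    (g : R → R') (hg : ∀ b ∈ R⁰, g b ∈ R'⁰) (hfg : ∀ b a, f (b * a) = g b * f a) :
    IsFactroid (f ⁻¹' H) := by
  refine ⟨?_, fun x hx y hy => ?_, fun x hx => ?_, fun b hb a h => ?_⟩
  · simpa using hH.zero_mem
  · simpa using hH.add_mem hx hy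
  · simpa using hH.neg_mem hx
  · exact hH.mem_of_mul_mem (hg b hb) (hfg b a ▸ h)

theorem prod {F : Set R} {G : Set S} (hF : IsFactroid F) (hG : IsFactroid G) :
    IsFactroid (F ×ˢ G) := by
  refine ⟨⟨hF.zero_mem, hG.zero_mem⟩, fun x hx y hy => ⟨hF.add_mem hx.1 hy.1, hG.add_mem hx.2 hy.2⟩,
    fun x hx => ⟨hF.neg_mem hx.1, hG.neg_mem hx.2⟩, fun b hb a ha => ?_⟩
  rw [Prod.mem_nonZeroDivisors_iff] at hb
  exact ⟨hF.mem_of_mul_mem hb.1 ha.1, hG.mem_of_mul_mem hb.2 ha.2⟩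

section Prod

variable {H : Set (R × S)} (hH : IsFactroid H)
include hH

theorem preimage_inl : IsFactroid (AddMonoidHom.inl R S ⁻¹' H) :=
  hH.preimage _ (fun b => (b, 1))
    (fun _ hb => Prod.mem_nonZeroDivisors_iff.mpr ⟨hb, one_mem _⟩) (fun _ _ => by simp)

theorem preimage_inr : IsFactroid (AddMonoidHom.inr R S ⁻¹' H) :=
  hH.preimage _ (fun b => (1, b))
    (fun _ hb => Prod.mem_nonZeroDivisors_iff.mpr ⟨one_mem _, hb⟩) (fun _ _ => by simp)

theorem mk_zero_mem {v : R} (hv : IsUnit v) (hv' : 1 - v ∈ R⁰) {a : R} {b : S}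
    (h : (a, b) ∈ H) : (a, 0) ∈ H :=
  hH.mem_of_sub_mul_eq_mul (u := (v, 1)) (w := (1 - v, 1))
    (Prod.isUnit_iff.mpr ⟨hv, isUnit_one⟩) (Prod.mem_nonZeroDivisors_iff.mpr ⟨hv', one_mem _⟩) h
    (by ext <;> simp only [Prod.fst_sub, Prod.snd_sub, Prod.fst_mul, Prod.snd_mul] <;> ring)

theorem zero_mk_mem {v : S} (hv : IsUnit v) (hv' : 1 - v ∈ S⁰) {a : R} {b : S}
    (h : (a, b) ∈ H) : (0, b) ∈ H :=
  hH.mem_of_sub_mul_eq_mul (u := (1, v)) (w := (1, 1 - v))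
    (Prod.isUnit_iff.mpr ⟨isUnit_one, hv⟩) (Prod.mem_nonZeroDivisors_iff.mpr ⟨one_mem _, hv'⟩) h
    (by ext <;> simp only [Prod.fst_sub, Prod.snd_sub, Prod.fst_mul, Prod.snd_mul] <;> ring)

theorem eq_prod_of_exists_ne_one [IsDomain R] [IsDomain S] (hunits : ∃ u : (R × S)ˣ, u ≠ 1) :
    H = (AddMonoidHom.inl R S ⁻¹' H) ×ˢ (AddMonoidHom.inr R S ⁻¹' H) := by
  obtain ⟨u, hu⟩ := hunits
  obtain ⟨hu₁, hu₂⟩ := Prod.isUnit_iff.mp u.isUnit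
  ext ⟨a, b⟩
  simp only [Set.mem_prod, Set.mem_preimage, AddMonoidHom.inl_apply, AddMonoidHom.inr_apply]
  refine ⟨fun h => ?_, fun h => by simpa using hH.add_mem h.1 h.2⟩
  by_cases hu₁' : (u : R × S).1 = 1
  · have hu₂' : (u : R × S).2 ≠ 1 := fun hu₂' => hu (Units.ext (Prod.ext hu₁' hu₂'))
    have h₂ : (0, b) ∈ H :=
      hH.zero_mk_mem hu₂ (mem_nonZeroDivisors_of_ne_zero (sub_ne_zero.mpr hu₂'.symm)) h
    exact ⟨by simpa using hH.sub_mem h h₂, h₂⟩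
  · have h₁ : (a, 0) ∈ H :=
      hH.mk_zero_mem hu₁ (mem_nonZeroDivisors_of_ne_zero (sub_ne_zero.mpr (Ne.symm hu₁'))) h
    exact ⟨h₁, by simpa using hH.sub_mem h h₁⟩

end Prod

end IsFactroid

end

/-- Let `A` and `B` be integral domains such that `A × B` has more than one unit.
Then the factroids of `A × B` are exactly the sets `F × G` with `F` a factroid of
`A` and `G` a factroid of `B`. -/
theorem stmt_16 {A B : Type*} [CommRing A] [IsDomain A] [CommRing B] [IsDomain B]
    (hunits : ∃ u : (A × B)ˣ, u ≠ 1) :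
    ∀ H : Set (A × B), IsFactroid H ↔
      ∃ (F : Set A) (G : Set B), IsFactroid F ∧ IsFactroid G ∧ H = F ×ˢ G := by
  refine fun H => ⟨fun hH => ?_, ?_⟩
  · exact ⟨_, _, hH.preimage_inl, hH.preimage_inr, hH.eq_prod_of_exists_ne_one hunits⟩
  · rintro ⟨F, G, hF, hG, rfl⟩
    exact hF.prod hG
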